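/- Let G be a connected simple graph with maximum degree 3 and let φ be a δ-minimum edge-colouring of G. Then for any edge e = uv coloured δ by φ, there exist two distinct colours x, y ∈ {α, β, γ} such that the connected component of φ(x,y) containing u also contains v and is a path of even length joining u and v. Moreover, e has either one end of degree 2 and the other of degree 3, or both ends of degree 3 (i.e., not both ends of e have degree 2). -/

import Mathlib

/-!
Let `uv` be a `δ`-edge. As `u` has at most two other edges, some colour `x ≠ δ` is missing at
`u`, and likewise some `z ≠ δ` at `v`. Then `x ≠ z`, or recolouring `uv` would save a `δ`-edge.
If `v` were not in the component of `u` in `φ(x,z)`, swapping `x` and `z` on that component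
would make `z` missing at both ends of `uv`, contradicting minimality in the same way. In
`φ(x,z)` every vertex has degree at most `2` and `u`, `v` have degree `1`, so the component is a
path from `u` to `v`; its colours alternate from `z` at `u` to `x` at `v`, so its length is even.
Finally the colours at `u` and at `v` together are all four colours, with `δ` at both, so
`deg u + deg v ≥ 5`.
-/

open SimpleGraph

namespace Parsimonious

/-- `φ` is a proper edge colouring of the set `F` of edges: two distinct edges of `F`
sharing a vertex receive different colours. -/
def ProperOn {V α : Type*} (F : Set (Sym2 V)) (φ : Sym2 V → α) : Prop :=
  ∀ ⦃e₁⦄, e₁ ∈ F → ∀ ⦃e₂⦄, e₂ ∈ F → e₁ ≠ e₂ → (∃ v, v ∈ e₁ ∧ v ∈ e₂) → φ e₁ ≠ φ e₂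

/-- `G` admits a proper edge colouring with `k` colours. -/
def EdgeColorable {V : Type*} (G : SimpleGraph V) (k : ℕ) : Prop :=
  ∃ φ : Sym2 V → Fin k, ProperOn G.edgeSet φ

/-- `γ(G)`: the largest fraction of the edges of `G` spanning a properly
3-edge-colourable subgraph. -/
noncomputable def gamma {V : Type*} (G : SimpleGraph V) : ℝ :=
  sSup {r : ℝ | ∃ F : Set (Sym2 V), F ⊆ G.edgeSet ∧
    (∃ φ : Sym2 V → Fin 3, ProperOn F φ) ∧
    r = (F.ncard : ℝ) / (G.edgeSet.ncard : ℝ)}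

/-- `s(G)`: the minimum number of edges coloured `δ` (colour `3`) over all proper
edge colourings of `G` with the four colours `α, β, γ, δ` (= `0, 1, 2, 3`). -/
noncomputable def sColor {V : Type*} (G : SimpleGraph V) : ℕ :=
  sInf {k : ℕ | ∃ φ : Sym2 V → Fin 4, ProperOn G.edgeSet φ ∧
    k = {e ∈ G.edgeSet | φ e = 3}.ncard}

/-- `φ` is a δ-minimum edge colouring of `G`. -/
def IsDeltaMin {V : Type*} (G : SimpleGraph V) (φ : Sym2 V → Fin 4) : Prop :=
  ProperOn G.edgeSet φ ∧ {e ∈ G.edgeSet | φ e = 3}.ncard = sColor G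

/-- The odd girth of `G`: the length of a shortest odd cycle. -/
noncomputable def oddGirth {V : Type*} (G : SimpleGraph V) : ℕ :=
  sInf {n : ℕ | Odd n ∧ ∃ (v : V) (c : G.Walk v v), c.IsCycle ∧ c.length = n}

/-- The Petersen graph, i.e. the Kneser graph `K(5,2)`. -/
def petersen : SimpleGraph {s : Finset (Fin 5) // s.card = 2} where
  Adj a b := Disjoint a.1 b.1
  symm := ⟨fun _ _ h => h.symm⟩
  loopless := ⟨fun a h => by
    have h2 : a.1 = ∅ := disjoint_self.mp h
    have hc := a.2
    rw [show a.1 = ∅ from h2] at hc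
    simp at hc⟩

/-- `φ(x,y)`: the subgraph of `G` spanned by the edges coloured `x` or `y`. -/
def twoColour {V : Type*} (G : SimpleGraph V) (φ : Sym2 V → Fin 4) (x y : Fin 4) :
    SimpleGraph V :=
  SimpleGraph.fromEdgeSet {e | e ∈ G.edgeSet ∧ (φ e = x ∨ φ e = y)}

/-- An edge is in `A_φ` when it is coloured `δ` and its ends are joined by a path
of `φ(α,β)`. -/
def InA {V : Type*} (G : SimpleGraph V) (φ : Sym2 V → Fin 4) (e : Sym2 V) : Prop :=
  e ∈ G.edgeSet ∧ φ e = 3 ∧ ∀ u v : V, e = s(u, v) → (twoColour G φ 0 1).Reachable u v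

/-- An edge is in `B_φ` when it is coloured `δ` and its ends are joined by a path
of `φ(β,γ)`. -/
def InB {V : Type*} (G : SimpleGraph V) (φ : Sym2 V → Fin 4) (e : Sym2 V) : Prop :=
  e ∈ G.edgeSet ∧ φ e = 3 ∧ ∀ u v : V, e = s(u, v) → (twoColour G φ 1 2).Reachable u v

/-- An edge is in `C_φ` when it is coloured `δ` and its ends are joined by a path
of `φ(α,γ)`. -/
def InC {V : Type*} (G : SimpleGraph V) (φ : Sym2 V → Fin 4) (e : Sym2 V) : Prop :=
  e ∈ G.edgeSet ∧ φ e = 3 ∧ ∀ u v : V, e = s(u, v) → (twoColour G φ 0 2).Reachable u v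

/-- The edge set of the odd cycle `C_{A_φ}(e)` associated to an edge `e ∈ A_φ`:
the component of `φ(α,β)` containing the ends of `e`, together with `e`. -/
def assocCycleA {V : Type*} (G : SimpleGraph V) (φ : Sym2 V → Fin 4) (e : Sym2 V) :
    Set (Sym2 V) :=
  insert e {f | f ∈ G.edgeSet ∧ (φ f = 0 ∨ φ f = 1) ∧
    ∃ x, x ∈ f ∧ ∃ y, y ∈ e ∧ (twoColour G φ 0 1).Reachable y x}

/-- The edge set of the odd cycle `C_{B_φ}(e)` associated to an edge `e ∈ B_φ`. -/
def assocCycleB {V : Type*} (G : SimpleGraph V) (φ : Sym2 V → Fin 4) (e : Sym2 V) :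
    Set (Sym2 V) :=
  insert e {f | f ∈ G.edgeSet ∧ (φ f = 1 ∨ φ f = 2) ∧
    ∃ x, x ∈ f ∧ ∃ y, y ∈ e ∧ (twoColour G φ 1 2).Reachable y x}

/-- The edge set of the odd cycle `C_{C_φ}(e)` associated to an edge `e ∈ C_φ`. -/
def assocCycleC {V : Type*} (G : SimpleGraph V) (φ : Sym2 V → Fin 4) (e : Sym2 V) :
    Set (Sym2 V) :=
  insert e {f | f ∈ G.edgeSet ∧ (φ f = 0 ∨ φ f = 2) ∧
    ∃ x, x ∈ f ∧ ∃ y, y ∈ e ∧ (twoColour G φ 0 2).Reachable y x}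

/-- The three sets `A_φ`, `B_φ`, `C_φ`. -/
def colourClass {V : Type*} (G : SimpleGraph V) (φ : Sym2 V → Fin 4) :
    Fin 3 → Set (Sym2 V)
  | 0 => {e | InA G φ e}
  | 1 => {e | InB G φ e}
  | 2 => {e | InC G φ e}

/-- `C` is one of the odd cycles associated to the δ-coloured edge `e`. -/
def IsAssocCycle {V : Type*} (G : SimpleGraph V) (φ : Sym2 V → Fin 4) (e : Sym2 V)
    (C : Set (Sym2 V)) : Prop :=
  (InA G φ e ∧ C = assocCycleA G φ e) ∨
  (InB G φ e ∧ C = assocCycleB G φ e) ∨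
  (InC G φ e ∧ C = assocCycleC G φ e)

end Parsimonious

namespace SimpleGraph.Walk.IsPath

variable {V : Type*} [Finite V] {H : SimpleGraph V} {a b : V} {p : H.Walk a b}

lemma ncard_neighborSet_le_toSubgraph (hp : p.IsPath) (hab : a ≠ b)
    (hdeg : ∀ w, (H.neighborSet w).ncard ≤ 2) (ha : (H.neighborSet a).ncard ≤ 1)
    (hb : (H.neighborSet b).ncard ≤ 1) {s : V} (hs : s ∈ p.support) :
    (H.neighborSet s).ncard ≤ (p.toSubgraph.neighborSet s).ncard := by
  have hnil : ¬ p.Nil := Walk.not_nil_of_ne hab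
  obtain ⟨i, rfl, hi⟩ := Walk.mem_support_iff_exists_getVert.mp hs
  rcases Nat.eq_zero_or_pos i with rfl | hi0
  · simpa [hp.neighborSet_toSubgraph_startpoint hnil] using ha
  rcases hi.lt_or_eq with hi | rfl
  · rw [hp.ncard_neighborSet_toSubgraph_internal_eq_two hi0.ne' hi]
    exact hdeg _
  · simpa [hp.neighborSet_toSubgraph_endpoint hnil] using hb

lemma neighborSet_subset_support (hp : p.IsPath) (hab : a ≠ b)
    (hdeg : ∀ w, (H.neighborSet w).ncard ≤ 2) (ha : (H.neighborSet a).ncard ≤ 1)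
    (hb : (H.neighborSet b).ncard ≤ 1) {s : V} (hs : s ∈ p.support) :
    H.neighborSet s ⊆ {w | w ∈ p.support} := by
  rw [← Set.eq_of_subset_of_ncard_le (p.toSubgraph.neighborSet_subset s)
    (hp.ncard_neighborSet_le_toSubgraph hab hdeg ha hb hs)]
  exact fun w hw => (p.mem_verts_toSubgraph).mp hw.snd_mem

lemma mem_support_of_reachable (hp : p.IsPath) (hab : a ≠ b)
    (hdeg : ∀ w, (H.neighborSet w).ncard ≤ 2) (ha : (H.neighborSet a).ncard ≤ 1)
    (hb : (H.neighborSet b).ncard ≤ 1) {w : V} (hw : H.Reachable a w) : w ∈ p.support := by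
  by_contra hwp
  obtain ⟨q⟩ := hw
  obtain ⟨d, -, hd, hd'⟩ := q.exists_boundary_dart {w | w ∈ p.support} p.start_mem_support hwp
  exact hd' (hp.neighborSet_subset_support hab hdeg ha hb hd d.adj)

end SimpleGraph.Walk.IsPath

theorem Nat.even_of_alternating {α : Type*} {x z : α} (hxz : x ≠ z) {c : ℕ → α} {n : ℕ}
    (hn : 0 < n) (hc : ∀ i < n, c i = x ∨ c i = z) (halt : ∀ i, i + 1 < n → c i ≠ c (i + 1))
    (h0 : c 0 = z) (hlast : c (n - 1) = x) : Even n := by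
  have key : ∀ i < n, c i = if Even i then z else x := by
    intro i
    induction i with
    | zero => exact fun _ => by simpa using h0
    | succ i ih =>
      intro hi
      have hne := halt i hi
      rw [ih (by omega)] at hne
      rcases hc (i + 1) hi with h | h <;> split_ifs at hne ⊢ with he <;>
        simp_all [Nat.even_add_one]
  have := key (n - 1) (by omega)
  rw [hlast] at this
  split_ifs at this with he
  · exact absurd this hxz
  · obtain ⟨m, rfl⟩ : ∃ m, n = m + 1 := ⟨n - 1, by omega⟩
    simpa [Nat.even_add_one] using he

namespace Parsimonious

variable {V : Type*} {G : SimpleGraph V} {φ : Sym2 V → Fin 4} {x z c : Fin 4} {u v : V}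

lemma twoColour_adj {a b : V} :
    (twoColour G φ x z).Adj a b ↔ G.Adj a b ∧ (φ s(a, b) = x ∨ φ s(a, b) = z) := by
  simp only [twoColour, fromEdgeSet_adj, Set.mem_ofPred_eq, mem_edgeSet]
  exact ⟨fun h => h.1, fun h => ⟨h, h.1.ne⟩⟩

lemma twoColour_comm : twoColour G φ x z = twoColour G φ z x := by
  simp only [twoColour, or_comm]

lemma reachable_twoColour_of_mem_edge {f : Sym2 V} (hf : f ∈ G.edgeSet)
    (hcol : φ f = x ∨ φ f = z) {w w' : V} (hw : w ∈ f) (hw' : w' ∈ f) :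
    (twoColour G φ x z).Reachable w w' := by
  rcases eq_or_ne w w' with rfl | hne
  · rfl
  obtain rfl := (Sym2.mem_and_mem_iff hne).mp ⟨hw, hw'⟩
  exact (twoColour_adj.mpr ⟨hf, hcol⟩).reachable

lemma ProperOn.ne_of_adj (hp : ProperOn G.edgeSet φ) {a b c : V} (hab : G.Adj a b)
    (hac : G.Adj a c) (hbc : b ≠ c) : φ s(a, b) ≠ φ s(a, c) :=
  hp hab hac (fun h => hbc (Sym2.congr_right.mp h)) ⟨a, Sym2.mem_mk_left _ _, Sym2.mem_mk_left _ _⟩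

def MissingAt (G : SimpleGraph V) (φ : Sym2 V → Fin 4) (c : Fin 4) (a : V) : Prop :=
  ∀ b, G.Adj a b → φ s(a, b) ≠ c

lemma MissingAt.ne (hm : MissingAt G φ c u) {f : Sym2 V} (hf : f ∈ G.edgeSet) (hu : u ∈ f) :
    φ f ≠ c := by
  obtain ⟨b, rfl⟩ := Sym2.mem_iff_exists.mp hu
  exact hm b hf

lemma ncard_neighborSet_twoColour_le (hp : ProperOn G.edgeSet φ) (a : V) {T : Set (Fin 4)}
    (hT : ∀ b, (twoColour G φ x z).Adj a b → φ s(a, b) ∈ T) :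
    ((twoColour G φ x z).neighborSet a).ncard ≤ T.ncard := by
  refine Set.ncard_le_ncard_of_injOn (fun b => φ s(a, b)) hT ?_
  intro b₁ hb₁ b₂ hb₂ h
  by_contra hne
  exact hp.ne_of_adj (twoColour_adj.mp hb₁).1 (twoColour_adj.mp hb₂).1 hne h

lemma ncard_neighborSet_twoColour_le_two (hp : ProperOn G.edgeSet φ) (a : V) :
    ((twoColour G φ x z).neighborSet a).ncard ≤ 2 :=
  (ncard_neighborSet_twoColour_le hp a (T := {x, z}) fun _ h => (twoColour_adj.mp h).2).trans
    ((Set.ncard_insert_le _ _).trans (by rw [Set.ncard_singleton]))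

lemma ncard_neighborSet_twoColour_le_one (hp : ProperOn G.edgeSet φ) (hu : MissingAt G φ x u) :
    ((twoColour G φ x z).neighborSet u).ncard ≤ 1 :=
  (ncard_neighborSet_twoColour_le hp u (T := {z}) fun b h =>
    (twoColour_adj.mp h).2.resolve_left (hu b (twoColour_adj.mp h).1)).trans
    (Set.ncard_singleton z).le

/-- An `x`–`z` path from a vertex missing `x` to one missing `z` starts with a `z`-edge and
ends with an `x`-edge, and its colours alternate. -/
lemma even_length_of_missingAt (hp : ProperOn G.edgeSet φ) (hxz : x ≠ z)
    {p : (twoColour G φ x z).Walk u v} (hpath : p.IsPath) (huv : u ≠ v)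
    (hu : MissingAt G φ x u) (hv : MissingAt G φ z v) : Even p.length := by
  have hedge : ∀ i < p.length, G.Adj (p.getVert i) (p.getVert (i + 1)) ∧
      (φ s(p.getVert i, p.getVert (i + 1)) = x ∨ φ s(p.getVert i, p.getVert (i + 1)) = z) :=
    fun i hi => twoColour_adj.mp (p.adj_getVert_succ hi)
  have hlen : 0 < p.length := Walk.not_nil_iff_lt_length.mp (Walk.not_nil_of_ne huv)
  refine Nat.even_of_alternating hxz hlen (fun i hi => (hedge i hi).2) ?_ ?_ ?_
  · intro i hi
    have hinj : p.getVert i ≠ p.getVert (i + 1 + 1) := fun h => by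
      have := hpath.getVert_injOn (by simp only [Set.mem_ofPred_eq]; omega)
        (by simp only [Set.mem_ofPred_eq]; omega) h
      omega
    rw [Sym2.eq_swap]
    exact hp.ne_of_adj (hedge i (by omega)).1.symm (hedge (i + 1) hi).1 hinj
  · have h0 := hedge 0 hlen
    rw [p.getVert_zero] at h0 ⊢
    exact h0.2.resolve_left (hu _ h0.1)
  · have hl := hedge (p.length - 1) (by omega)
    rw [Nat.sub_add_cancel hlen, p.getVert_length] at hl ⊢
    exact hl.2.resolve_right (hv.ne hl.1 (Sym2.mem_mk_right _ _))

lemma mem_support_of_missingAt [Finite V] (hp : ProperOn G.edgeSet φ)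
    {p : (twoColour G φ x z).Walk u v} (hpath : p.IsPath) (huv : u ≠ v)
    (hu : MissingAt G φ x u) (hv : MissingAt G φ z v) {w : V}
    (hw : (twoColour G φ x z).Reachable u w) : w ∈ p.support :=
  hpath.mem_support_of_reachable huv (ncard_neighborSet_twoColour_le_two hp)
    (ncard_neighborSet_twoColour_le_one hp hu)
    (twoColour_comm (G := G) ▸ ncard_neighborSet_twoColour_le_one hp hv) hw

open Classical in
/-- The Kempe change at `u`: swap the colours `x` and `z` on every edge meeting the component
of `u` in `φ(x,z)`. Edges of other colours are fixed by the swap anyway. -/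
noncomputable def kempeSwap (G : SimpleGraph V) (φ : Sym2 V → Fin 4) (x z : Fin 4) (u : V) :
    Sym2 V → Fin 4 := fun f =>
  if ∃ w ∈ f, (twoColour G φ x z).Reachable u w then Equiv.swap x z (φ f) else φ f

lemma kempeSwap_properOn (hp : ProperOn G.edgeSet φ) :
    ProperOn G.edgeSet (kempeSwap G φ x z u) := by
  intro f₁ hf₁ f₂ hf₂ hne ⟨w, hw₁, hw₂⟩
  have swapped_ne_unswapped : ∀ f g, f ∈ G.edgeSet → g ∈ G.edgeSet → f ≠ g → w ∈ f → w ∈ g →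
      (∃ w ∈ f, (twoColour G φ x z).Reachable u w) →
      ¬ (∃ w ∈ g, (twoColour G φ x z).Reachable u w) → Equiv.swap x z (φ f) ≠ φ g := by
    rintro f g hf hg hfg hwf hwg ⟨w₀, hw₀, hr⟩ hg' heq
    by_cases hcol : φ f = x ∨ φ f = z
    · -- then `w` lies in the component, and so would `g`, whose colour is `x` or `z`
      have hgcol : φ g = x ∨ φ g = z := by
        rcases hcol with h | h <;> simp [← heq, h]
      exact hg' ⟨w, hwg, hr.trans (reachable_twoColour_of_mem_edge hf hcol hw₀ hwf)⟩
    · push Not at hcol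
      rw [Equiv.swap_apply_of_ne_of_ne hcol.1 hcol.2] at heq
      exact hp hf hg hfg ⟨w, hwf, hwg⟩ heq
  unfold kempeSwap
  split_ifs with h₁ h₂ h₂
  · exact fun h => hp hf₁ hf₂ hne ⟨w, hw₁, hw₂⟩ ((Equiv.swap x z).injective h)
  · exact swapped_ne_unswapped f₁ f₂ hf₁ hf₂ hne hw₁ hw₂ h₁ h₂
  · exact (swapped_ne_unswapped f₂ f₁ hf₂ hf₁ hne.symm hw₂ hw₁ h₂ h₁).symm
  · exact hp hf₁ hf₂ hne ⟨w, hw₁, hw₂⟩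

lemma kempeSwap_eq_three_iff (hx : x ≠ 3) (hz : z ≠ 3) {f : Sym2 V} :
    kempeSwap G φ x z u f = 3 ↔ φ f = 3 := by
  unfold kempeSwap
  split_ifs
  · rw [Equiv.swap_apply_eq_iff, Equiv.swap_apply_of_ne_of_ne hx.symm hz.symm]
  · rfl

lemma isDeltaMin_kempeSwap (hφ : IsDeltaMin G φ) (hx : x ≠ 3) (hz : z ≠ 3) :
    IsDeltaMin G (kempeSwap G φ x z u) :=
  ⟨kempeSwap_properOn hφ.1, by simp only [kempeSwap_eq_three_iff hx hz]; exact hφ.2⟩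

lemma IsDeltaMin.ncard_le (hφ : IsDeltaMin G φ) {ψ : Sym2 V → Fin 4}
    (hψ : ProperOn G.edgeSet ψ) :
    {e ∈ G.edgeSet | φ e = 3}.ncard ≤ {e ∈ G.edgeSet | ψ e = 3}.ncard :=
  hφ.2 ▸ Nat.sInf_le ⟨ψ, hψ, rfl⟩

lemma properOn_update_of_missingAt [DecidableEq V] (hp : ProperOn G.edgeSet φ)
    (hu : MissingAt G φ c u) (hv : MissingAt G φ c v) :
    ProperOn G.edgeSet (Function.update φ s(u, v) c) := by
  have hmiss : ∀ f ∈ G.edgeSet, ∀ w ∈ f, w ∈ s(u, v) → φ f ≠ c := by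
    intro f hf w hwf hw
    rcases Sym2.mem_iff.mp hw with rfl | rfl
    exacts [hu.ne hf hwf, hv.ne hf hwf]
  intro f₁ hf₁ f₂ hf₂ hne ⟨w, hw₁, hw₂⟩
  by_cases h₁ : f₁ = s(u, v) <;> by_cases h₂ : f₂ = s(u, v)
  · exact absurd (h₁.trans h₂.symm) hne
  · subst h₁
    rw [Function.update_self, Function.update_of_ne h₂]
    exact (hmiss f₂ hf₂ w hw₂ hw₁).symm
  · subst h₂
    rw [Function.update_self, Function.update_of_ne h₁]
    exact hmiss f₁ hf₁ w hw₁ hw₂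
  · rw [Function.update_of_ne h₁, Function.update_of_ne h₂]
    exact hp hf₁ hf₂ hne ⟨w, hw₁, hw₂⟩

/-- Otherwise recolouring `uv` with `c` would save a `δ`-edge. -/
lemma IsDeltaMin.not_missingAt_both [Finite V] (hφ : IsDeltaMin G φ) (he : G.Adj u v)
    (hδ : φ s(u, v) = 3) (hc : c ≠ 3) : ¬ (MissingAt G φ c u ∧ MissingAt G φ c v) := by
  classical
  rintro ⟨hu, hv⟩
  have hset : {e ∈ G.edgeSet | Function.update φ s(u, v) c e = 3} =
      {e ∈ G.edgeSet | φ e = 3} \ {s(u, v)} := by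
    ext f
    by_cases hf : f = s(u, v)
    · subst hf
      simp [hc]
    · simp [hf]
  have hle := hφ.ncard_le (properOn_update_of_missingAt hφ.1 hu hv)
  rw [hset] at hle
  exact (Set.ncard_sdiff_singleton_lt_of_mem
    (show s(u, v) ∈ {e ∈ G.edgeSet | φ e = 3} from ⟨he, hδ⟩)).not_ge hle

/-- Otherwise the Kempe change at `u` would give a `δ`-minimum colouring in which `z` is
missing at both ends of `uv`. -/
lemma IsDeltaMin.reachable_of_missingAt [Finite V] (hφ : IsDeltaMin G φ) (he : G.Adj u v)
    (hδ : φ s(u, v) = 3) (hx : x ≠ 3) (hz : z ≠ 3) (hu : MissingAt G φ x u)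
    (hv : MissingAt G φ z v) : (twoColour G φ x z).Reachable u v := by
  by_contra hr
  have hu' : MissingAt G (kempeSwap G φ x z u) z u := by
    intro b hb h
    rw [kempeSwap, if_pos ⟨u, Sym2.mem_mk_left _ _, .rfl⟩, Equiv.swap_apply_eq_iff,
      Equiv.swap_apply_right] at h
    exact hu b hb h
  have hv' : MissingAt G (kempeSwap G φ x z u) z v := by
    intro b hb h
    unfold kempeSwap at h
    split_ifs at h with hin
    · rw [Equiv.swap_apply_eq_iff, Equiv.swap_apply_right] at h
      obtain ⟨w, hw, hrw⟩ := hin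
      exact hr (hrw.trans
        (reachable_twoColour_of_mem_edge hb (.inl h) hw (Sym2.mem_mk_left _ _)))
    · exact hv b hb h
  exact (isDeltaMin_kempeSwap hφ hx hz).not_missingAt_both he
    ((kempeSwap_eq_three_iff hx hz).mpr hδ) hz ⟨hu', hv'⟩

section Degrees

variable [Fintype V] [DecidableRel G.Adj]

def coloursAt (G : SimpleGraph V) [DecidableRel G.Adj] (φ : Sym2 V → Fin 4) (u : V) :
    Finset (Fin 4) :=
  (G.neighborFinset u).image (fun w => φ s(u, w))

lemma card_coloursAt (hp : ProperOn G.edgeSet φ) (u : V) :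
    (coloursAt G φ u).card = G.degree u := by
  rw [coloursAt, Finset.card_image_of_injOn, card_neighborFinset_eq_degree]
  intro w₁ h₁ w₂ h₂ h
  by_contra hne
  exact hp.ne_of_adj ((G.mem_neighborFinset u w₁).mp h₁) ((G.mem_neighborFinset u w₂).mp h₂) hne h

lemma mem_coloursAt (he : G.Adj u v) : φ s(u, v) ∈ coloursAt G φ u :=
  Finset.mem_image_of_mem _ ((G.mem_neighborFinset u v).mpr he)

lemma notMem_coloursAt_iff : c ∉ coloursAt G φ u ↔ MissingAt G φ c u := by
  simp [coloursAt, MissingAt]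

lemma exists_missingAt (hp : ProperOn G.edgeSet φ) (hdeg : G.degree u ≤ 3) (he : G.Adj u v)
    (hδ : φ s(u, v) = 3) : ∃ c ≠ 3, MissingAt G φ c u := by
  by_contra! h
  have huniv : coloursAt G φ u = Finset.univ := Finset.eq_univ_of_forall fun c => by
    rcases eq_or_ne c 3 with rfl | hc
    · exact hδ ▸ mem_coloursAt he
    · exact not_not.mp (mt notMem_coloursAt_iff.mp (h c hc))
  have := card_coloursAt hp u
  rw [huniv, Finset.card_univ, Fintype.card_fin] at this
  omega

/-- The colour sets at the ends cover all four colours and share `δ`. -/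
lemma IsDeltaMin.five_le_degree_add_degree (hφ : IsDeltaMin G φ) (he : G.Adj u v)
    (hδ : φ s(u, v) = 3) : 5 ≤ G.degree u + G.degree v := by
  have hunion : coloursAt G φ u ∪ coloursAt G φ v = Finset.univ :=
    Finset.eq_univ_of_forall fun c => by
      rcases eq_or_ne c 3 with rfl | hc
      · exact Finset.mem_union_left _ (hδ ▸ mem_coloursAt he)
      · by_contra h
        simp only [Finset.mem_union, not_or, notMem_coloursAt_iff] at h
        exact hφ.not_missingAt_both he hδ hc h
  have hinter : 3 ∈ coloursAt G φ u ∩ coloursAt G φ v :=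
    Finset.mem_inter.mpr ⟨hδ ▸ mem_coloursAt he, hδ ▸ Sym2.eq_swap ▸ mem_coloursAt he.symm⟩
  have := Finset.card_union_add_card_inter (coloursAt G φ u) (coloursAt G φ v)
  rw [hunion, Finset.card_univ, Fintype.card_fin, card_coloursAt hφ.1, card_coloursAt hφ.1]
    at this
  have := Finset.card_pos.mpr ⟨3, hinter⟩
  omega

end Degrees

end Parsimonious

open Parsimonious in
theorem deltaMin_even_path_and_degrees_general {V : Type*} [Fintype V] (G : SimpleGraph V)
    [DecidableRel G.Adj] (hdeg : G.maxDegree ≤ 3)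
    (φ : Sym2 V → Fin 4) (hφ : IsDeltaMin G φ)
    (u v : V) (he : G.Adj u v) (hδ : φ s(u, v) = 3) :
    (∃ x y : Fin 4, x ≠ y ∧ x ≠ 3 ∧ y ≠ 3 ∧
      ∃ p : (twoColour G φ x y).Walk u v, p.IsPath ∧ Even p.length ∧
        ∀ w, (twoColour G φ x y).Reachable u w → w ∈ p.support) ∧
    ((G.degree u = 2 ∧ G.degree v = 3) ∨ (G.degree u = 3 ∧ G.degree v = 2) ∨
      (G.degree u = 3 ∧ G.degree v = 3)) := by
  have hdeg' : ∀ w, G.degree w ≤ 3 := fun w => (G.degree_le_maxDegree w).trans hdeg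
  obtain ⟨x, hx, hxu⟩ := exists_missingAt hφ.1 (hdeg' u) he hδ
  obtain ⟨z, hz, hzv⟩ := exists_missingAt hφ.1 (hdeg' v) he.symm (Sym2.eq_swap ▸ hδ)
  have hxz : x ≠ z := by
    rintro rfl
    exact hφ.not_missingAt_both he hδ hx ⟨hxu, hzv⟩
  obtain ⟨p, hpath⟩ := (hφ.reachable_of_missingAt he hδ hx hz hxu hzv).exists_isPath
  refine ⟨⟨x, z, hxz, hx, hz, p, hpath,
    even_length_of_missingAt hφ.1 hxz hpath he.ne hxu hzv,
    fun w => mem_support_of_missingAt hφ.1 hpath he.ne hxu hzv⟩, ?_⟩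
  have := hφ.five_le_degree_add_degree he hδ
  have := hdeg' u
  have := hdeg' v
  omega

open Parsimonious in
/-- In a δ-minimum edge colouring `φ` of a connected graph of maximum
degree 3, every edge `e = uv` coloured `δ` has two colours `x, y` among `{α, β, γ}` such
that the component of `φ(x,y)` containing `u` is a path of even length joining `u`
and `v`; moreover one end of `e` has degree 2 and the other degree 3, or both ends
have degree 3. -/
theorem deltaMin_even_path_and_degrees {V : Type*} [Fintype V] (G : SimpleGraph V)
    [DecidableRel G.Adj] (hconn : G.Connected) (hdeg : G.maxDegree ≤ 3)
    (φ : Sym2 V → Fin 4) (hφ : IsDeltaMin G φ)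
    (u v : V) (he : G.Adj u v) (hδ : φ s(u, v) = 3) :
    (∃ x y : Fin 4, x ≠ y ∧ x ≠ 3 ∧ y ≠ 3 ∧
      ∃ p : (twoColour G φ x y).Walk u v, p.IsPath ∧ Even p.length ∧
        ∀ w, (twoColour G φ x y).Reachable u w → w ∈ p.support) ∧
    ((G.degree u = 2 ∧ G.degree v = 3) ∨ (G.degree u = 3 ∧ G.degree v = 2) ∨
      (G.degree u = 3 ∧ G.degree v = 3)) :=
  deltaMin_even_path_and_degrees_general G hdeg φ hφ u v he hδ
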